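/- Positivity of the contact condition for the plug: given smooth 𝒜, ℬ on the square Q with -1 < 𝒜 ≤ 0, 𝒜ₓ = 1 and ℬ ≥ ε/2 on a subrectangle R, ℬₓ > 0 and ℬ = x off R, for all 0 < δ < 1/|min(x𝒜ₓ)| the function ℬₓ(1-δ𝒜) + δ𝒜ₓℬ is strictly positive on Q. -/
import Mathlib

/-- Positivity of the contact condition for the plug (Lemma `contact4`):
with `-1 < 𝒜 ≤ 0` on `Q`; `𝒜ₓ = 1`, `ℬ ≥ ε/2`, `ℬₓ ≥ 0` on the subrectangle
`R`; and `ℬₓ = 1`, `ℬ = x` off `R`, the function `ℬₓ(1-δ𝒜) + δ𝒜ₓℬ` is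
strictly positive on `Q` for all small `δ > 0` (namely whenever
`δ·|𝒜ₓ·x| < 1` off `R`). -/
theorem stmt_13 (Q R : Set (ℝ × ℝ)) (hRQ : R ⊆ Q) (ε δ : ℝ)
    (𝒜 Ax ℬ Bx : ℝ × ℝ → ℝ)
    (hε : 0 < ε) (hδ : 0 < δ)
    (h𝒜 : ∀ p ∈ Q, -1 < 𝒜 p ∧ 𝒜 p ≤ 0)
    (hR : ∀ p ∈ R, Ax p = 1 ∧ ε / 2 ≤ ℬ p ∧ 0 ≤ Bx p)
    (hQR : ∀ p ∈ Q \ R, Bx p = 1 ∧ ℬ p = p.2)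
    (hsmall : ∀ p ∈ Q \ R, δ * |Ax p * p.2| < 1) :
    ∀ p ∈ Q, 0 < Bx p * (1 - δ * 𝒜 p) + δ * Ax p * ℬ p := by
  intro p hp
  obtain ⟨hA1, hA0⟩ := h𝒜 p hp
  have h1 : (1 : ℝ) ≤ 1 - δ * 𝒜 p := by nlinarith
  by_cases hpR : p ∈ R
  · obtain ⟨hAx, hB, hBx⟩ := hR p hpR
    rw [hAx]
    nlinarith
  · obtain ⟨hBx, hB⟩ := hQR p ⟨hp, hpR⟩
    have hs := hsmall p ⟨hp, hpR⟩
    rw [hBx, hB]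
    have h2 : -(δ * |Ax p * p.2|) ≤ δ * (Ax p * p.2) := by
      have := neg_abs_le (Ax p * p.2)
      nlinarith
    nlinarith [mul_assoc δ (Ax p) p.2]
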